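/- arXiv:1303.5037 — 4 statements merged into one kernel-verified Lean document; each statement's English description precedes it below -/
import Mathlib

section
/- If X ⊆ ℕ^ℕ is cofinal in the eventual dominance order <*, then there exists m ∈ ℕ such that X is cofinal in the order <^m, where f <^m g means f(n) < g(n) for all n ≥ m. -/
/-! If no `m` works, pick for every `m` a witness `g m` that no `f ∈ X` beats from `m` on.
The diagonal bound `G n = max_{m ≤ n} g m n` eventually dominates every `g m`, so an `f ∈ X`
with `G <^m f` also beats `g m` from `m` on, a contradiction. -/

theorem exists_diagonal_bound {α : Type*} [SemilatticeSup α] [OrderBot α] (g : ℕ → ℕ → α) :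
    ∃ G : ℕ → α, ∀ m n, m ≤ n → g m n ≤ G n :=
  ⟨fun n => (Finset.range (n + 1)).sup (g · n), fun _ _ hmn =>
    Finset.le_sup (f := (g · _)) (Finset.mem_range_succ_iff.mpr hmn)⟩

/-- If `X ⊆ ℕ^ℕ` is cofinal in eventual dominance `<*`, then there is an `m` such
that `X` is cofinal in `<^m`, where `f <^m g` means `f n < g n` for all `n ≥ m`. -/
theorem cofinal_eventual_dominance_uniform (X : Set (ℕ → ℕ))
    (hcof : ∀ g : ℕ → ℕ, ∃ f ∈ X, ∃ m : ℕ, ∀ n ≥ m, g n < f n) :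
    ∃ m : ℕ, ∀ g : ℕ → ℕ, ∃ f ∈ X, ∀ n ≥ m, g n < f n := by
  by_contra! h
  choose g hg using h
  obtain ⟨G, hG⟩ := exists_diagonal_bound g
  obtain ⟨f, hfX, m, hGf⟩ := hcof G
  obtain ⟨n, hmn, hfg⟩ := hg m f hfX
  exact (hfg.trans (hG m n hmn)).not_gt (hGf n hmn)
end

section
/- Every separable unital UHF algebra is simple. -/
/-- A unital C*-algebra is UHF if every finite set of elements can be approximated
arbitrarily well from a unital C*-subalgebra isomorphic to a full matrix algebra. -/
def IsUHF (A : Type*) [CStarAlgebra A] : Prop :=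
  ∀ (s : Finset A) (ε : ℝ), 0 < ε →
    ∃ (B : StarSubalgebra ℂ A) (k : ℕ),
      Nonempty (B ≃⋆ₐ[ℂ] Matrix (Fin k) (Fin k) ℂ) ∧ ∀ x ∈ s, ∃ y ∈ B, ‖x - y‖ < ε

/-! If `1 ∉ I`, then `I` meets every matrix subalgebra `B` trivially, since matrix algebras are
simple. This forces `‖b‖ ≤ ‖b - z‖` for `b ∈ B` and `z ∈ I`. By the C*-identity it suffices to
take `b` selfadjoint; then `b` has finite spectrum, and the spectral projection `p` of `b` at a
spectral value `μ` with `|μ| = ‖b‖` lies in `B`. If `‖b - z‖ < |μ|`, the compression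
`p (b - z) p = μ p - p z p` shows `‖p - μ⁻¹ p z p‖ < 1`, and a Neumann series then puts `p`
into `I`, a contradiction. Approximating
`x ∈ I` by `b ∈ B` within `‖x‖ / 2` now gives `x = 0`. -/

theorem IsIntegral.finite_spectrum {K A : Type*} [Field K] [Ring A] [Algebra K A] {a : A}
    (ha : IsIntegral K a) : (spectrum K a).Finite := by
  classical
  rcases subsingleton_or_nontrivial A with _ | _
  · simp [spectrum.of_subsingleton]
  refine (minpoly K a).roots.toFinset.finite_toSet.subset fun μ hμ ↦ ?_
  have := spectrum.subset_polynomial_aeval a (minpoly K a) ⟨μ, hμ, rfl⟩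
  rw [minpoly.aeval, spectrum.zero_eq] at this
  simpa [minpoly.ne_zero ha] using this

theorem TwoSidedIdeal.mem_of_norm_sub_mul_lt_one {R : Type*} [NormedRing R] [CompleteSpace R]
    {I : TwoSidedIdeal R} {p z : R} (hp : IsIdempotentElem p) (hz : z ∈ I)
    (h : ‖p - p * z‖ < 1) : p ∈ I := by
  let u : Rˣ := Units.oneSub _ h
  have hpu : p * u = p * z := by
    simp only [u, Units.val_oneSub, mul_sub, mul_one, ← mul_assoc, hp.eq]
    abel
  rw [← u.mul_inv_cancel_right p, hpu]
  exact I.mul_mem_right _ _ (I.mul_mem_left _ _ hz)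

theorem TwoSidedIdeal.eq_zero_of_map_mem {R S F : Type*} [Ring R] [IsSimpleRing R] [Ring S]
    [FunLike F R S] [RingHomClass F R S] {I : TwoSidedIdeal S} (hI : (1 : S) ∉ I) (f : F)
    {x : R} (hx : f x ∈ I) : x = 0 := by
  have hbot : I.comap f = ⊥ :=
    (IsSimpleOrder.eq_bot_or_eq_top _).resolve_right fun htop ↦ hI <| by
      have h1 : (1 : R) ∈ I.comap f := htop ▸ TwoSidedIdeal.mem_top R
      simpa [TwoSidedIdeal.mem_comap] using h1
  simpa [hbot] using (TwoSidedIdeal.mem_comap f).mpr hx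

section CStarAlgebra

variable {A : Type*} [CStarAlgebra A]

theorem IsStarNormal.exists_isStarProjection_mul_eq_smul {c : A} [IsStarNormal c]
    (hfin : (spectrum ℂ c).Finite) {μ : ℂ} (hμ : μ ∈ spectrum ℂ c) :
    ∃ p ∈ StarAlgebra.elemental ℂ c, IsStarProjection p ∧ p ≠ 0 ∧ c * p = μ • p := by
  classical
  let f : ℂ → ℂ := fun z ↦ if z = μ then 1 else 0
  have hf : ContinuousOn f (spectrum ℂ c) := hfin.continuousOn f
  have hspec : spectrum ℂ (cfc f c) = f '' spectrum ℂ c := cfc_map_spectrum f c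
  refine ⟨cfc f c, cfc_mem_elemental f c, ?_, ?_, ?_⟩
  · refine isStarProjection_iff_spectrum_subset_and_isStarNormal.mpr ⟨?_, inferInstance⟩
    rw [hspec]
    rintro _ ⟨z, -, rfl⟩
    by_cases h : z = μ <;> simp [f, h]
  · intro h0
    have : (1 : ℂ) ∈ spectrum ℂ (cfc f c) := hspec ▸ ⟨μ, hμ, by simp [f]⟩
    rcases subsingleton_or_nontrivial A with _ | _
    · simp [spectrum.of_subsingleton] at hμ
    · simp [h0, spectrum.zero_eq] at this
  · have : (fun z ↦ z * f z) = fun z ↦ μ • f z := by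
      funext z
      by_cases h : z = μ <;> simp [f, h]
    rw [← cfc_smul μ f c, ← this, cfc_mul (fun z ↦ z) f c, cfc_id' ℂ c]

theorem IsStarProjection.mem_twoSidedIdeal_of_norm_sub_lt {I : TwoSidedIdeal A} {p c w : A}
    (hp : IsStarProjection p) {μ : ℂ} (hcp : c * p = μ • p) (hw : w ∈ I)
    (h : ‖c - w‖ < ‖μ‖) : p ∈ I := by
  have hμ : μ ≠ 0 := norm_pos_iff.mp ((norm_nonneg _).trans_lt h)
  have hpcp : p * c * p = μ • p := by
    rw [mul_assoc, hcp, mul_smul_comm, hp.isIdempotentElem.eq]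
  have hcompress : p - p * (w * (μ⁻¹ • p)) = μ⁻¹ • (p * (c - w) * p) := by
    rw [mul_sub, sub_mul, hpcp, smul_sub, smul_smul, inv_mul_cancel₀ hμ, one_smul,
      mul_smul_comm, mul_smul_comm, mul_assoc]
  refine I.mem_of_norm_sub_mul_lt_one hp.isIdempotentElem (I.mul_mem_right _ (μ⁻¹ • p) hw) ?_
  have hp1 : ‖p‖ ≤ 1 := hp.norm_le
  calc ‖p - p * (w * (μ⁻¹ • p))‖ = ‖μ‖⁻¹ * ‖p * (c - w) * p‖ := by
        rw [hcompress, norm_smul, norm_inv]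
    _ ≤ ‖μ‖⁻¹ * ‖c - w‖ := by
        gcongr
        calc ‖p * (c - w) * p‖ ≤ ‖p‖ * ‖c - w‖ * ‖p‖ := norm_mul₃_le
          _ ≤ 1 * ‖c - w‖ * 1 := by gcongr
          _ = ‖c - w‖ := by ring
    _ < 1 := by rwa [inv_mul_lt_one₀ (norm_pos_iff.mpr hμ)]

section FiniteDimensional

variable {B : StarSubalgebra ℂ A} [FiniteDimensional ℂ B] {I : TwoSidedIdeal A}

theorem IsSelfAdjoint.norm_le_norm_sub_of_mem_twoSidedIdeal (hBI : ∀ b ∈ B, b ∈ I → b = 0)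
    {c w : A} (hcB : c ∈ B) (hc : IsSelfAdjoint c) (hw : w ∈ I) : ‖c‖ ≤ ‖c - w‖ := by
  by_contra! hlt
  have : Nontrivial A :=
    nontrivial_of_ne c 0 (norm_pos_iff.mp ((norm_nonneg _).trans_lt hlt))
  have hfin : (spectrum ℂ c).Finite :=
    IsIntegral.finite_spectrum ((IsIntegral.of_finite ℂ (⟨c, hcB⟩ : B)).map B.subtype)
  obtain ⟨μ, hμ, hμc⟩ := spectrum.exists_nnnorm_eq_spectralRadius c
  rw [hc.spectralRadius_eq_nnnorm, ENNReal.coe_inj] at hμc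
  have : IsStarNormal c := hc.isStarNormal
  obtain ⟨p, hpc, hp, hp0, hcp⟩ :=
    IsStarNormal.exists_isStarProjection_mul_eq_smul hfin hμ
  have hpB : p ∈ B :=
    StarAlgebra.elemental.le_of_mem B.toSubalgebra.toSubmodule.closed_of_finiteDimensional hcB hpc
  have hpI : p ∈ I := hp.mem_twoSidedIdeal_of_norm_sub_lt hcp hw (by
    rwa [← coe_nnnorm μ, hμc, coe_nnnorm])
  exact hp0 (hBI p hpB hpI)

theorem norm_le_norm_sub_of_mem_twoSidedIdeal (hBI : ∀ b ∈ B, b ∈ I → b = 0)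
    {b z : A} (hb : b ∈ B) (hz : z ∈ I) : ‖b‖ ≤ ‖b - z‖ := by
  have hstar : ‖star b * b‖ ≤ ‖star b * b - star b * z‖ :=
    (IsSelfAdjoint.star_mul_self b).norm_le_norm_sub_of_mem_twoSidedIdeal hBI
      (mul_mem (star_mem hb) hb) (I.mul_mem_left _ _ hz)
  rw [CStarRing.norm_star_mul_self, ← mul_sub] at hstar
  have : ‖b‖ * ‖b‖ ≤ ‖b‖ * ‖b - z‖ := hstar.trans (norm_mul_le_of_le (norm_star b).le le_rfl)
  rcases (norm_nonneg b).eq_or_lt with h0 | hpos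
  · rw [← h0]; exact norm_nonneg _
  · exact le_of_mul_le_mul_left this hpos

end FiniteDimensional

theorem StarSubalgebra.eq_zero_of_mem_twoSidedIdeal_of_equiv_matrix {B : StarSubalgebra ℂ A}
    {k : ℕ} (φ : B ≃⋆ₐ[ℂ] Matrix (Fin k) (Fin k) ℂ) {I : TwoSidedIdeal A} (hI : (1 : A) ∉ I)
    {b : A} (hb : b ∈ B) (hbI : b ∈ I) : b = 0 := by
  suffices (⟨b, hb⟩ : B) = 0 from congrArg Subtype.val this
  rcases isEmpty_or_nonempty (Fin k) with _ | _
  · exact φ.toEquiv.subsingleton.elim _ _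
  · refine (map_eq_zero_iff φ φ.injective).mp (TwoSidedIdeal.eq_zero_of_map_mem hI
      (B.subtype.comp (φ.symm : Matrix (Fin k) (Fin k) ℂ →⋆ₐ[ℂ] B)) ?_)
    simpa using hbI

end CStarAlgebra

theorem uhf_simple_general (A : Type*) [CStarAlgebra A] (hA : IsUHF A) (I : TwoSidedIdeal A) :
    I = ⊥ ∨ I = ⊤ := by
  by_cases h1 : (1 : A) ∈ I
  · exact Or.inr (I.eq_top h1)
  refine Or.inl (eq_bot_iff.mpr fun x hx ↦ (TwoSidedIdeal.mem_bot _).mpr ?_)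
  by_contra hx0
  have hxpos : 0 < ‖x‖ := norm_pos_iff.mpr hx0
  obtain ⟨B, k, ⟨φ⟩, happrox⟩ := hA {x} (‖x‖ / 2) (by positivity)
  obtain ⟨y, hyB, hxy⟩ := happrox x (Finset.mem_singleton_self x)
  have : FiniteDimensional ℂ B := φ.toAlgEquiv.toLinearEquiv.symm.finiteDimensional
  have hy : ‖y‖ ≤ ‖y - x‖ := norm_le_norm_sub_of_mem_twoSidedIdeal
    (fun _ hb hbI ↦ B.eq_zero_of_mem_twoSidedIdeal_of_equiv_matrix φ h1 hb hbI) hyB hx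
  rw [norm_sub_rev] at hy
  linarith [norm_le_insert' x y]

/-- Every separable unital UHF algebra is simple: it has no nontrivial closed
two-sided ideals. -/
theorem uhf_simple (A : Type*) [CStarAlgebra A] [Nontrivial A]
    [TopologicalSpace.SeparableSpace A] (hA : IsUHF A)
    (I : TwoSidedIdeal A) (hI : IsClosed (I : Set A)) :
    I = ⊥ ∨ I = ⊤ :=
  uhf_simple_general A hA I
end

section
/- There is a universal constant K (one may take the argument to yield K in terms of the finite-dimensional constant K_{FD}) such that: for any finite-dimensional C*-algebra A, any AF algebra B, and any map ρ : A → B with defect δ < 10^{-6}, there exists a *-homomorphism φ : A → B with ‖ρ − φ‖ ≤ K δ, assuming that every Borel-measurable map between finite-dimensional C*-algebras with defect δ' < 1/1000 is within K_{FD} δ' of a *-homomorphism. -/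
/-- `DefectLE ρ δ` says that the defect of the map `ρ` (a measure of its failure to be
a *-homomorphism) is at most `δ`. -/
def DefectLE {A B : Type*} [NonUnitalCStarAlgebra A] [NonUnitalCStarAlgebra B]
    (ρ : A → B) (δ : ℝ) : Prop :=
  ∀ a b : A, ‖a‖ ≤ 1 → ‖b‖ ≤ 1 → ∀ t : ℂ, ‖t‖ ≤ 1 →
    ‖ρ (a * b) - ρ a * ρ b‖ ≤ δ ∧ ‖ρ (a + b) - (ρ a + ρ b)‖ ≤ δ ∧
    ‖ρ (star a) - star (ρ a)‖ ≤ δ ∧ ‖ρ (t • a) - t • ρ a‖ ≤ δ ∧ |‖a‖ - ‖ρ a‖| ≤ δ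

/-- An AF algebra: every finite set of elements can be approximated arbitrarily well
from a finite-dimensional C*-subalgebra. -/
def IsAF (B : Type*) [NonUnitalCStarAlgebra B] : Prop :=
  ∀ (s : Finset B) (ε : ℝ), 0 < ε →
    ∃ C : NonUnitalStarSubalgebra ℂ B, FiniteDimensional ℂ C ∧
      ∀ x ∈ s, ∃ y ∈ C, ‖x - y‖ < ε

/-!
Discretize `ρ`: approximate its values on a finite `δ`-net of the unit ball of `A` inside a
finite-dimensional subalgebra `C` of `B` (this is where `B` is AF), and send each element to the
approximant attached to a nearest net point, a choice that can be made Borel measurably. The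
resulting map `A → C` is `O(δ)`-close to `ρ`, hence has defect `O(δ)`, and the
finite-dimensional theorem, applied in the unitization of `C`, gives the *-homomorphism.
The cases `δ = 0`, where `ρ` is already a *-homomorphism on the unit ball, and `K_FD δ` large,
where `0` will do, are treated separately.
-/

namespace DefectLE

variable {A B : Type*} [NonUnitalCStarAlgebra A] [NonUnitalCStarAlgebra B] {ρ : A → B} {δ : ℝ}

lemma nonneg (h : DefectLE ρ δ) : 0 ≤ δ :=
  (norm_nonneg _).trans (h 0 0 (by simp) (by simp) 0 (by simp)).1

lemma norm_apply_le (h : DefectLE ρ δ) {a : A} (ha : ‖a‖ ≤ 1) : ‖ρ a‖ ≤ ‖a‖ + δ := by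
  have := abs_le.mp (h a a ha ha 0 (by simp)).2.2.2.2
  linarith [this.1]

lemma norm_apply_sub_apply_le (h : DefectLE ρ δ) {u v : A} (hv : ‖v‖ ≤ 1)
    (huv : ‖u - v‖ ≤ 1) : ‖ρ u - ρ v‖ ≤ ‖u - v‖ + 2 * δ := by
  have hadd := (h v (u - v) hv huv 0 (by simp)).2.1
  rw [add_sub_cancel] at hadd
  calc ‖ρ u - ρ v‖ = ‖(ρ u - (ρ v + ρ (u - v))) + ρ (u - v)‖ := by congr 1; abel
    _ ≤ δ + (‖u - v‖ + δ) := (norm_add_le _ _).trans (add_le_add hadd (h.norm_apply_le huv))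
    _ = ‖u - v‖ + 2 * δ := by ring

lemma norm_apply_sub_two_smul_le (h : DefectLE ρ δ) {a : A} (ha : ‖a‖ ≤ 2) :
    ‖ρ a - (2 : ℂ) • ρ ((2 : ℂ)⁻¹ • a)‖ ≤ δ := by
  have hx : ‖(2 : ℂ)⁻¹ • a‖ ≤ 1 := by
    rw [norm_smul]; norm_num; linarith
  have := (h _ _ hx hx 0 (by simp)).2.1
  rwa [← two_smul ℂ ((2 : ℂ)⁻¹ • a), smul_smul, mul_inv_cancel₀ two_ne_zero, one_smul,
    ← two_smul ℂ] at this

lemma comp_isometry_iff {B' : Type*} [NonUnitalCStarAlgebra B'] (f : B →⋆ₙₐ[ℂ] B')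
    (hf : Isometry f) : DefectLE (f ∘ ρ) δ ↔ DefectLE ρ δ := by
  have hnorm : ∀ x, ‖f x‖ = ‖x‖ := hf.norm_map_of_map_zero (map_zero f)
  simp only [DefectLE, Function.comp_apply, ← map_mul, ← map_add, ← map_star, ← map_smul,
    ← map_sub, hnorm]

lemma norm_map_mul_sub_of_norm_sub_le (h : DefectLE ρ δ) (hδ : δ ≤ 1) {ε : ℝ} (hε : ε ≤ 1)
    {σ : A → B} (hσ : ∀ a : A, ‖a‖ ≤ 2 → ‖σ a - ρ a‖ ≤ ε) {a b : A} (ha : ‖a‖ ≤ 1)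
    (hb : ‖b‖ ≤ 1) : ‖σ (a * b) - σ a * σ b‖ ≤ δ + 6 * ε := by
  have hε0 : 0 ≤ ε := (norm_nonneg _).trans (hσ 0 (by simp))
  have hδ0 := h.nonneg
  have hρa : ‖ρ a‖ ≤ 1 + δ := (h.norm_apply_le ha).trans (by linarith)
  have hσb : ‖σ b‖ ≤ 1 + δ + ε := by
    calc ‖σ b‖ = ‖(σ b - ρ b) + ρ b‖ := by rw [sub_add_cancel]
      _ ≤ ε + (1 + δ) := norm_add_le_of_le (hσ b (by linarith))
          ((h.norm_apply_le hb).trans (by linarith))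
      _ = 1 + δ + ε := by ring
  have hab : ‖a * b‖ ≤ 2 := (norm_mul_le a b).trans (by nlinarith [norm_nonneg a])
  calc ‖σ (a * b) - σ a * σ b‖
      = ‖(σ (a * b) - ρ (a * b)) + (ρ (a * b) - ρ a * ρ b) + ρ a * (ρ b - σ b)
          + (ρ a - σ a) * σ b‖ := by congr 1; noncomm_ring
    _ ≤ ε + δ + (1 + δ) * ε + ε * (1 + δ + ε) := by
      refine norm_add₄_le.trans (add_le_add_three (add_le_add (hσ _ hab)
        (h a b ha hb 0 (by simp)).1) ?_ ?_)
      · refine (norm_mul_le _ _).trans (mul_le_mul hρa ?_ (norm_nonneg _) (by linarith))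
        rw [norm_sub_rev]; exact hσ b (by linarith)
      · refine (norm_mul_le _ _).trans (mul_le_mul ?_ hσb (norm_nonneg _) hε0)
        rw [norm_sub_rev]; exact hσ a (by linarith)
    _ ≤ δ + 6 * ε := by nlinarith

/-- Closeness is required on the ball of radius `2` because it contains the sums and products
of elements of the unit ball. -/
lemma of_norm_sub_le (h : DefectLE ρ δ) (hδ : δ ≤ 1) {ε : ℝ} (hε : ε ≤ 1) {σ : A → B}
    (hσ : ∀ a : A, ‖a‖ ≤ 2 → ‖σ a - ρ a‖ ≤ ε) : DefectLE σ (δ + 6 * ε) := by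
  intro a b ha hb t ht
  have hε0 : 0 ≤ ε := (norm_nonneg _).trans (hσ 0 (by simp))
  have close : ∀ x : A, ‖x‖ ≤ 2 → ‖ρ x - σ x‖ ≤ ε := fun x hx => norm_sub_rev (σ x) _ ▸ hσ x hx
  have ha2 : ‖a‖ ≤ 2 := by linarith
  have hb2 : ‖b‖ ≤ 2 := by linarith
  obtain ⟨-, hadd, hstar, hsmul, hnorm⟩ := h a b ha hb t ht
  refine ⟨h.norm_map_mul_sub_of_norm_sub_le hδ hε hσ ha hb, ?_, ?_, ?_, ?_⟩
  · calc ‖σ (a + b) - (σ a + σ b)‖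
        = ‖(σ (a + b) - ρ (a + b)) + (ρ (a + b) - (ρ a + ρ b)) + (ρ a - σ a)
            + (ρ b - σ b)‖ := by congr 1; abel
      _ ≤ ε + δ + ε + ε := norm_add₄_le.trans (add_le_add_three
          (add_le_add (hσ _ ((norm_add_le a b).trans (by linarith))) hadd) (close a ha2)
          (close b hb2))
      _ ≤ δ + 6 * ε := by linarith
  · calc ‖σ (star a) - star (σ a)‖
        = ‖(σ (star a) - ρ (star a)) + (ρ (star a) - star (ρ a)) + star (ρ a - σ a)‖ := by
          rw [star_sub]; congr 1; abel
      _ ≤ ε + δ + ε := norm_add₃_le.trans (add_le_add_three (hσ _ (by rwa [norm_star])) hstar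
          (by rw [norm_star]; exact close a ha2))
      _ ≤ δ + 6 * ε := by linarith
  · calc ‖σ (t • a) - t • σ a‖
        = ‖(σ (t • a) - ρ (t • a)) + (ρ (t • a) - t • ρ a) + t • (ρ a - σ a)‖ := by
          rw [smul_sub]; congr 1; abel
      _ ≤ ε + δ + ε := norm_add₃_le.trans (add_le_add_three
          (hσ _ (by rw [norm_smul]; nlinarith [norm_nonneg t])) hsmul
          (by rw [norm_smul]; nlinarith [close a ha2, norm_nonneg (ρ a - σ a)]))
      _ ≤ δ + 6 * ε := by linarith
  · calc |‖a‖ - ‖σ a‖| ≤ |‖a‖ - ‖ρ a‖| + |‖ρ a‖ - ‖σ a‖| := abs_sub_le _ _ _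
      _ ≤ δ + ε := add_le_add hnorm ((abs_norm_sub_norm_le _ _).trans (close a ha2))
      _ ≤ δ + 6 * ε := by linarith

end DefectLE

lemma norm_ofReal_inv_smul_le_one {E : Type*} [SeminormedAddCommGroup E] [NormedSpace ℂ E]
    {x : E} {r : ℝ} (hr : 0 < r) (hx : ‖x‖ ≤ r) : ‖((r : ℂ))⁻¹ • x‖ ≤ 1 := by
  rwa [norm_smul, norm_inv, Complex.norm_real, Real.norm_of_nonneg hr.le, inv_mul_le_one₀ hr]

section ZeroDefect

variable {A B : Type*} [NonUnitalCStarAlgebra A] [NonUnitalCStarAlgebra B] {ρ : A → B} {x y : A}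

namespace DefectLE

lemma map_smul_of_zero (h : DefectLE ρ 0) (hx : ‖x‖ ≤ 1) {t : ℂ} (ht : ‖t‖ ≤ 1) :
    ρ (t • x) = t • ρ x :=
  sub_eq_zero.mp (norm_le_zero_iff.mp (h x x hx hx t ht).2.2.2.1)

lemma map_star_of_zero (h : DefectLE ρ 0) (hx : ‖x‖ ≤ 1) : ρ (star x) = star (ρ x) :=
  sub_eq_zero.mp (norm_le_zero_iff.mp (h x x hx hx 0 (by simp)).2.2.1)

lemma map_add_of_zero (h : DefectLE ρ 0) (hx : ‖x‖ ≤ 1) (hy : ‖y‖ ≤ 1) :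
    ρ (x + y) = ρ x + ρ y :=
  sub_eq_zero.mp (norm_le_zero_iff.mp (h x y hx hy 0 (by simp)).2.1)

lemma map_mul_of_zero (h : DefectLE ρ 0) (hx : ‖x‖ ≤ 1) (hy : ‖y‖ ≤ 1) :
    ρ (x * y) = ρ x * ρ y :=
  sub_eq_zero.mp (norm_le_zero_iff.mp (h x y hx hy 0 (by simp)).1)

end DefectLE

noncomputable def homogenize (ρ : A → B) (a : A) : B :=
  ((‖a‖ + 1 : ℝ) : ℂ) • ρ (((‖a‖ + 1 : ℝ) : ℂ)⁻¹ • a)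

lemma homogenize_eq (h : DefectLE ρ 0) {r : ℝ} (hr : 0 < r) (hx : ‖x‖ ≤ r) :
    homogenize ρ x = (r : ℂ) • ρ ((r : ℂ)⁻¹ • x) := by
  have rescale : ∀ r s : ℝ, 0 < r → ‖x‖ ≤ r → r ≤ s →
      (s : ℂ) • ρ ((s : ℂ)⁻¹ • x) = (r : ℂ) • ρ ((r : ℂ)⁻¹ • x) := by
    intro r s hr hx hrs
    have hs : 0 < s := hr.trans_le hrs
    have hrC : (r : ℂ) ≠ 0 := by exact_mod_cast hr.ne'
    have hsC : (s : ℂ) ≠ 0 := by exact_mod_cast hs.ne'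
    have hrs' : ‖((r / s : ℝ) : ℂ)‖ ≤ 1 := by
      rw [Complex.norm_real, Real.norm_of_nonneg (by positivity)]
      exact div_le_one_of_le₀ hrs hs.le
    have hsr : (s : ℂ)⁻¹ • x = ((r / s : ℝ) : ℂ) • (r : ℂ)⁻¹ • x := by
      rw [smul_smul]; congr 1; push_cast; field_simp
    rw [hsr, h.map_smul_of_zero (norm_ofReal_inv_smul_le_one hr hx) hrs', smul_smul]
    congr 1; push_cast; field_simp
  rcases le_total r (‖x‖ + 1) with hle | hle
  · exact rescale r _ hr hx hle
  · exact (rescale _ r (by positivity) (by linarith) hle).symm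

lemma homogenize_apply_of_norm_le_one (h : DefectLE ρ 0) (hx : ‖x‖ ≤ 1) :
    homogenize ρ x = ρ x := by
  simpa using homogenize_eq h one_pos hx

lemma homogenize_add (h : DefectLE ρ 0) (x y : A) :
    homogenize ρ (x + y) = homogenize ρ x + homogenize ρ y := by
  have hr : 0 < ‖x‖ + ‖y‖ + 1 := by positivity
  have hx : ‖x‖ ≤ ‖x‖ + ‖y‖ + 1 := by linarith [norm_nonneg y]
  have hy : ‖y‖ ≤ ‖x‖ + ‖y‖ + 1 := by linarith [norm_nonneg x]
  rw [homogenize_eq h hr ((norm_add_le x y).trans (by linarith)), homogenize_eq h hr hx,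
    homogenize_eq h hr hy, smul_add, h.map_add_of_zero (norm_ofReal_inv_smul_le_one hr hx)
    (norm_ofReal_inv_smul_le_one hr hy), smul_add]

lemma homogenize_smul (h : DefectLE ρ 0) (t : ℂ) (x : A) :
    homogenize ρ (t • x) = t • homogenize ρ x := by
  set r := ‖x‖ + 1
  have hr : 0 < r := by positivity
  have hx : ‖x‖ ≤ r := by linarith
  have hrC : (r : ℂ) ≠ 0 := by exact_mod_cast hr.ne'
  have htC : (‖t‖ : ℂ) + 1 ≠ 0 := by exact_mod_cast (by positivity : ‖t‖ + 1 ≠ 0)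
  have htr : 0 < (‖t‖ + 1) * r := by positivity
  have htx : ‖t • x‖ ≤ (‖t‖ + 1) * r := by rw [norm_smul]; nlinarith [norm_nonneg t]
  have hc : ‖t * ((‖t‖ + 1 : ℝ)⁻¹ : ℝ)‖ ≤ 1 := by
    rw [norm_mul, Complex.norm_real, Real.norm_of_nonneg (by positivity), ← div_eq_mul_inv,
      div_le_one (by positivity)]
    linarith
  have htx' : (((‖t‖ + 1) * r : ℝ) : ℂ)⁻¹ • (t • x)
      = (t * ((‖t‖ + 1 : ℝ)⁻¹ : ℝ)) • (r : ℂ)⁻¹ • x := by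
    rw [smul_smul, smul_smul]; congr 1; push_cast; field_simp
  rw [homogenize_eq h htr htx, homogenize_eq h hr hx, htx',
    h.map_smul_of_zero (norm_ofReal_inv_smul_le_one hr hx) hc, smul_smul, smul_smul]
  congr 1; push_cast; field_simp

lemma homogenize_mul (h : DefectLE ρ 0) (x y : A) :
    homogenize ρ (x * y) = homogenize ρ x * homogenize ρ y := by
  set r := ‖x‖ + ‖y‖ + 1
  have hr : 0 < r := by positivity
  have hx : ‖x‖ ≤ r := by linarith [norm_nonneg y]
  have hy : ‖y‖ ≤ r := by linarith [norm_nonneg x]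
  have hxy : ‖x * y‖ ≤ r * r := (norm_mul_le x y).trans (by nlinarith [norm_nonneg x])
  have hxy' : (((r * r : ℝ)) : ℂ)⁻¹ • (x * y) = ((r : ℂ)⁻¹ • x) * ((r : ℂ)⁻¹ • y) := by
    rw [smul_mul_smul_comm]; push_cast; rw [mul_inv]
  rw [homogenize_eq h (by positivity) hxy, homogenize_eq h hr hx, homogenize_eq h hr hy, hxy',
    h.map_mul_of_zero (norm_ofReal_inv_smul_le_one hr hx) (norm_ofReal_inv_smul_le_one hr hy),
    smul_mul_smul_comm]
  push_cast; rfl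

lemma homogenize_star (h : DefectLE ρ 0) (x : A) :
    homogenize ρ (star x) = star (homogenize ρ x) := by
  have hr : 0 < ‖x‖ + 1 := by positivity
  have hx : ‖x‖ ≤ ‖x‖ + 1 := by linarith
  rw [homogenize_eq h hr (by rwa [norm_star]), homogenize_eq h hr hx, star_smul,
    ← h.map_star_of_zero (norm_ofReal_inv_smul_le_one hr hx), star_smul]
  simp [Complex.conj_ofReal]

lemma DefectLE.exists_eq_of_zero (h : DefectLE ρ 0) :
    ∃ φ : A →⋆ₙₐ[ℂ] B, ∀ a : A, ‖a‖ ≤ 1 → ρ a = φ a :=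
  ⟨{ toFun := homogenize ρ
     map_smul' := homogenize_smul h
     map_zero' := by simpa using homogenize_smul h 0 0
     map_add' := homogenize_add h
     map_mul' := homogenize_mul h
     map_star' := homogenize_star h },
    fun a ha => (homogenize_apply_of_norm_le_one h ha).symm⟩

end ZeroDefect

open Metric MeasureTheory

lemma IsCompact.exists_seq_cover {X : Type*} [PseudoMetricSpace X] [Nonempty X] {K : Set X}
    (hK : IsCompact K) {ε : ℝ} (hε : 0 < ε) :
    ∃ (e : ℕ → X) (N : ℕ), ∀ x ∈ K, ∃ k ≤ N, dist (e k) x < ε := by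
  obtain ⟨t, -, hcover⟩ := hK.elim_nhds_subcover (fun x => ball x ε)
    (fun x _ => ball_mem_nhds x hε)
  refine ⟨fun k => t.toList.getD k (Classical.arbitrary X), t.toList.length, fun x hx => ?_⟩
  obtain ⟨y, hyt, hxy⟩ := Set.mem_iUnion₂.mp (hcover hx)
  obtain ⟨k, hk, rfl⟩ := List.getElem_of_mem (Finset.mem_toList.mpr hyt)
  refine ⟨k, hk.le, ?_⟩
  dsimp only
  rwa [List.getD_eq_getElem _ _ hk, dist_comm, ← mem_ball]

/-- Since `ρ` is only controlled on the unit ball, an element of norm at most `2` is sent to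
twice the approximant attached to the net point nearest to its half. -/
lemma DefectLE.exists_measurable_approx {A B : Type*} [NonUnitalCStarAlgebra A] [ProperSpace A]
    [MeasurableSpace A] [BorelSpace A] [NonUnitalCStarAlgebra B] (hB : IsAF B)
    {ρ : A → B} {δ : ℝ} (hρ : DefectLE ρ δ) (hδ : 0 < δ) (hδ1 : δ ≤ 1) :
    ∃ C : NonUnitalStarSubalgebra ℂ B, FiniteDimensional ℂ C ∧ ∃ (ι : A → ℕ) (w : ℕ → C),
      Measurable ι ∧ ∀ a : A, ‖a‖ ≤ 2 → ‖(w (ι a) : B) - ρ a‖ ≤ 9 * δ := by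
  classical
  obtain ⟨e, N, hcover⟩ := (isCompact_closedBall (0 : A) 1).exists_seq_cover hδ
  obtain ⟨C, hC, happrox⟩ := hB ((Finset.range (N + 1)).image (ρ ∘ e)) δ hδ
  have hv : ∀ k, ∃ v : C, k ≤ N → ‖ρ (e k) - v‖ < δ := by
    intro k
    by_cases hk : k ≤ N
    · obtain ⟨y, hyC, hy⟩ := happrox (ρ (e k))
        (Finset.mem_image_of_mem _ (Finset.mem_range.mpr (Nat.lt_succ_of_le hk)))
      exact ⟨⟨y, hyC⟩, fun _ => hy⟩
    · exact ⟨0, fun h => absurd h hk⟩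
  choose v hv using hv
  let ι : A → ℕ := fun a => SimpleFunc.nearestPtInd e N ((2 : ℂ)⁻¹ • a)
  refine ⟨C, hC, ι, fun k => (2 : ℂ) • v k,
    (SimpleFunc.nearestPtInd e N).measurable.comp (continuous_const_smul _).measurable,
    fun a ha => ?_⟩
  set x := (2 : ℂ)⁻¹ • a
  set k := ι a
  have hx : ‖x‖ ≤ 1 := by rw [norm_smul]; norm_num; linarith
  have hk : k ≤ N := SimpleFunc.nearestPtInd_le e N x
  have hkx : ‖e k - x‖ < δ := by
    obtain ⟨j, hj, hjx⟩ := hcover x (by simpa using hx)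
    have hnearest := SimpleFunc.edist_nearestPt_le e x hj
    rw [edist_dist, edist_dist, ENNReal.ofReal_le_ofReal_iff dist_nonneg] at hnearest
    rw [← dist_eq_norm]
    exact hnearest.trans_lt hjx
  have hvx : ‖(v k : B) - ρ x‖ ≤ 4 * δ := by
    calc ‖(v k : B) - ρ x‖ = ‖-(ρ (e k) - v k) + (ρ (e k) - ρ x)‖ := by congr 1; abel
      _ ≤ δ + (δ + 2 * δ) := norm_add_le_of_le (by rw [norm_neg]; exact (hv k hk).le)
          ((hρ.norm_apply_sub_apply_le hx (by linarith)).trans (by linarith))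
      _ = 4 * δ := by ring
  calc ‖((2 : ℂ) • v k : C) - ρ a‖
      = ‖(2 : ℂ) • ((v k : B) - ρ x) - (ρ a - (2 : ℂ) • ρ x)‖ := by
        congr 1; rw [smul_sub]; push_cast; abel
    _ ≤ 2 * (4 * δ) + δ := by
        refine (norm_sub_le _ _).trans (add_le_add ?_ (hρ.norm_apply_sub_two_smul_le ha))
        rw [norm_smul]; norm_num; exact hvx
    _ = 9 * δ := by ring

lemma NonUnitalStarAlgHom.exists_inr_eq_of_norm_fst_one_lt {A C : Type*} [Semiring A]
    [Module ℂ A] [Star A] [NonUnitalCStarAlgebra C] (ψ : A →⋆ₙₐ[ℂ] Unitization ℂ C)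
    (hψ : ‖(ψ 1).fst‖ < 1) : ∃ φ : A →⋆ₙₐ[ℂ] C, ∀ a, ψ a = φ a := by
  have hidem : IsIdempotentElem (ψ 1).fst := by
    rw [IsIdempotentElem, ← Unitization.fst_mul, ← map_mul, one_mul]
  have hfst1 : (ψ 1).fst = 0 :=
    (IsIdempotentElem.iff_eq_zero_or_one.mp hidem).resolve_right (by rintro h; simp [h] at hψ)
  have hinr : ∀ a, (ψ a).snd = ψ a := fun a => by
    refine Unitization.ext ?_ (Unitization.snd_inr _ _)
    rw [Unitization.fst_inr, ← one_mul a, map_mul, Unitization.fst_mul, hfst1, zero_mul]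
  let e := Unitization.inrRangeEquiv ℂ C
  refine ⟨e.symm.toNonUnitalStarAlgHom.comp (NonUnitalStarAlgHom.codRestrict ψ _ fun a =>
    ⟨(ψ a).snd, hinr a⟩), fun a => ?_⟩
  exact (hinr a).symm

/-- The statement of Farah's stability theorem for finite-dimensional C*-algebras, with
constant `K`. -/
def IsUlamStableFinDim (K : ℝ) : Prop :=
  ∀ (A B : Type) [CStarAlgebra A] [FiniteDimensional ℂ A]
    [CStarAlgebra B] [FiniteDimensional ℂ B]
    [MeasurableSpace A] [BorelSpace A] [MeasurableSpace B] [BorelSpace B]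
    (ρ : A → B) (δ : ℝ), Measurable ρ → DefectLE ρ δ → δ < 1 / 1000 →
    ∃ φ : A →⋆ₙₐ[ℂ] B, ∀ a : A, ‖a‖ ≤ 1 → ‖ρ a - φ a‖ ≤ K * δ

namespace IsUlamStableFinDim

variable {K : ℝ}

/-- The target may be non-unital: apply stability in the unitization, where the scalar part of
the resulting homomorphism is a character that is small on the unit, hence zero. -/
lemma exists_near_of_nonUnital (hK : IsUlamStableFinDim K) {A C : Type} [CStarAlgebra A]
    [FiniteDimensional ℂ A] [MeasurableSpace A] [BorelSpace A] [NonUnitalCStarAlgebra C]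
    [FiniteDimensional ℂ C] [MeasurableSpace C] [BorelSpace C] {σ : A → C} (hσm : Measurable σ)
    {ε : ℝ} (hσ : DefectLE σ ε) (hε : ε < 1 / 1000) (hKε : K * ε < 1) :
    ∃ φ : A →⋆ₙₐ[ℂ] C, ∀ a : A, ‖a‖ ≤ 1 → ‖σ a - φ a‖ ≤ K * ε := by
  borelize (Unitization ℂ C)
  have : FiniteDimensional ℂ (Unitization ℂ C) :=
    Module.Finite.equiv (Unitization.linearEquiv ℂ ℂ C).symm
  let inr := Unitization.inrNonUnitalStarAlgHom ℂ C
  have hinr : Isometry inr := Unitization.isometry_inr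
  obtain ⟨ψ, hψ⟩ := hK A (Unitization ℂ C) (inr ∘ σ) ε (hinr.continuous.measurable.comp hσm)
    ((DefectLE.comp_isometry_iff inr hinr).mpr hσ) hε
  have hone : ‖(1 : A)‖ ≤ 1 := by
    rcases subsingleton_or_nontrivial A with _ | _
    · simp [Subsingleton.elim (1 : A) 0]
    · exact CStarRing.norm_one.le
  have hfst : ‖(ψ 1).fst‖ < 1 := by
    calc ‖(ψ 1).fst‖ = ‖(inr (σ 1) - ψ 1).fst‖ := by
          rw [show (inr (σ 1) - ψ 1).fst = (inr (σ 1)).fst - (ψ 1).fst from rfl,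
            Unitization.inrNonUnitalStarAlgHom_apply, Unitization.fst_inr, zero_sub, norm_neg]
      _ ≤ ‖inr (σ 1) - ψ 1‖ := by rw [Unitization.norm_eq_sup]; exact le_sup_left
      _ ≤ K * ε := hψ 1 hone
      _ < 1 := hKε
  obtain ⟨φ, hφ⟩ := ψ.exists_inr_eq_of_norm_fst_one_lt hfst
  refine ⟨φ, fun a ha => ?_⟩
  simpa [inr, hφ, ← Unitization.inr_sub, Unitization.norm_inr] using hψ a ha

lemma exists_near_of_isAF (hK : IsUlamStableFinDim K) {A B : Type} [CStarAlgebra A]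
    [FiniteDimensional ℂ A] [NonUnitalCStarAlgebra B] (hB : IsAF B) {ρ : A → B} {δ : ℝ}
    (hρ : DefectLE ρ δ) (hδ0 : 0 < δ) (hδ : 55 * δ < 1 / 1000) (hKδ : K * (55 * δ) < 1) :
    ∃ φ : A →⋆ₙₐ[ℂ] B, ∀ a : A, ‖a‖ ≤ 1 → ‖ρ a - φ a‖ ≤ (55 * K + 9) * δ := by
  borelize A
  obtain ⟨C, hC, ι, w, hι, hw⟩ := hρ.exists_measurable_approx hB hδ0 (by linarith)
  have : IsClosed (C : Set B) := C.toSubmodule.closed_of_finiteDimensional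
  borelize ↥C
  let incl := NonUnitalStarSubalgebraClass.subtype C
  have hσ : DefectLE (fun a => w (ι a)) (55 * δ) := by
    rw [← DefectLE.comp_isometry_iff incl isometry_subtype_coe,
      show 55 * δ = δ + 6 * (9 * δ) by ring]
    exact hρ.of_norm_sub_le (by linarith) (by linarith) hw
  obtain ⟨φ, hφ⟩ := hK.exists_near_of_nonUnital (measurable_from_nat.comp hι) hσ hδ hKδ
  refine ⟨incl.comp φ, fun a ha => ?_⟩
  calc ‖ρ a - φ a‖ ≤ ‖ρ a - w (ι a)‖ + ‖(w (ι a) : B) - φ a‖ := norm_sub_le_norm_sub_add_norm_sub ..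
    _ ≤ 9 * δ + K * (55 * δ) := add_le_add (by rw [norm_sub_rev]; exact hw a (by linarith))
        (hφ a ha)
    _ = (55 * K + 9) * δ := by ring

end IsUlamStableFinDim

/-- Assuming Farah's finite-dimensional stability theorem (any Borel-measurable map
between finite-dimensional C*-algebras with defect `δ' < 1/1000` is uniformly within
`K_FD δ'` of a *-homomorphism), there is a universal constant `K` such that every map
from a finite-dimensional C*-algebra into an AF algebra with defect `δ < 10⁻⁶` is
uniformly within `K δ` of a *-homomorphism. -/
theorem defect_small_implies_close_to_hom_AF (K_FD : ℝ)
    (hFD : ∀ (A B : Type) [CStarAlgebra A] [FiniteDimensional ℂ A]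
      [CStarAlgebra B] [FiniteDimensional ℂ B]
      [MeasurableSpace A] [BorelSpace A] [MeasurableSpace B] [BorelSpace B]
      (ρ : A → B) (δ : ℝ), Measurable ρ → DefectLE ρ δ → δ < 1 / 1000 →
      ∃ φ : A →⋆ₙₐ[ℂ] B, ∀ a : A, ‖a‖ ≤ 1 → ‖ρ a - φ a‖ ≤ K_FD * δ) :
    ∃ K : ℝ, ∀ (A B : Type) [CStarAlgebra A] [FiniteDimensional ℂ A]
      [NonUnitalCStarAlgebra B], IsAF B →
      ∀ (ρ : A → B) (δ : ℝ), DefectLE ρ δ → δ < 1 / 1000000 →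
        ∃ φ : A →⋆ₙₐ[ℂ] B, ∀ a : A, ‖a‖ ≤ 1 → ‖ρ a - φ a‖ ≤ K * δ := by
  refine ⟨55 * K_FD + 9, fun A B _ _ _ hB ρ δ hρ hδ => ?_⟩
  rcases hρ.nonneg.eq_or_lt with rfl | hδ0
  · obtain ⟨φ, hφ⟩ := hρ.exists_eq_of_zero
    exact ⟨φ, fun a ha => by simp [hφ a ha]⟩
  by_cases hKδ : K_FD * (55 * δ) < 1
  · exact IsUlamStableFinDim.exists_near_of_isAF hFD hB hρ hδ0 (by linarith) hKδ
  · refine ⟨0, fun a ha => ?_⟩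
    have := hρ.norm_apply_le ha
    simp only [NonUnitalStarAlgHom.zero_apply, sub_zero]
    nlinarith
end

section
/- Let φ : Q(A) → Q(B) be a *-homomorphism between corona algebras of separable C*-algebras A and B. If φ admits a strict lift (a map L : M(A) → M(B), continuous for the strict topologies on bounded sets, with π∘L = φ∘π), then the graph Γ_φ = {(a,b) ∈ M(A)_1 × M(B)_1 : φ(a + A) = b + B} is a Borel subset of M(A)_1 × M(B)_1, where each unit ball carries the (Polish) strict topology. -/
/-! The graph is the preimage of the ideal `B ⊆ 𝓜(B)` under `(a, b) ↦ L a - b`, whose left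
evaluations `(a, b) ↦ (L a - b) c` are strictly continuous on the product of unit balls.
As `B` is norm-closed and separable with a dense sequence `d`, `m ∈ B` iff for every `j` some
`‖m - d n‖ ≤ 1/(j+1)`; and each such norm ball is closed for any topology making the left
evaluations continuous, being `⋂ c, {m | ‖(m - d n) c‖ ≤ ‖c‖/(j+1)}`. Hence the graph is
`F_σδ`. -/

open Filter Topology
open scoped MultiplierAlgebra

/-- The strict topology on the multiplier algebra `𝓜(ℂ, B)`: the initial topology with
respect to the maps `T ↦ T b` and `T ↦ b T` into `B` (`b ∈ B`). -/
noncomputable def strictTopM (B : Type*) [NonUnitalCStarAlgebra B] :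
    TopologicalSpace 𝓜(ℂ, B) :=
  ⨅ b : B, (TopologicalSpace.induced (fun T : 𝓜(ℂ, B) => T.fst b) inferInstance ⊓
    TopologicalSpace.induced (fun T : 𝓜(ℂ, B) => T.snd b) inferInstance)

open Set

theorem Metric.mem_closure_range_iff_nat_le {α β : Type*} [PseudoMetricSpace α] {e : β → α}
    {a : α} : a ∈ closure (range e) ↔ ∀ n : ℕ, ∃ k : β, dist a (e k) ≤ 1 / ((n : ℝ) + 1) := by
  refine ⟨fun h n => ?_, fun h => Metric.mem_closure_range_iff.2 fun ε hε => ?_⟩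
  · obtain ⟨k, hk⟩ := Metric.mem_closure_range_iff_nat.1 h n
    exact ⟨k, hk.le⟩
  · obtain ⟨n, hn⟩ := exists_nat_one_div_lt hε
    obtain ⟨k, hk⟩ := h n
    exact ⟨k, hk.trans_lt hn⟩

namespace DoubleCentralizer

variable {B : Type*} [NonUnitalCStarAlgebra B]

theorem norm_coe (b : B) : ‖(b : 𝓜(ℂ, B))‖ = ‖b‖ := by
  rw [← norm_fst, coe_fst, ContinuousLinearMap.opNorm_mul_apply]

theorem isometry_coe : Isometry (fun b : B => (b : 𝓜(ℂ, B))) :=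
  AddMonoidHomClass.isometry_of_norm (coeHom (𝕜 := ℂ) (A := B)) norm_coe

theorem range_coe_eq_closure_range_coe_of_denseRange {ι : Type*} {d : ι → B} (hd : DenseRange d) :
    range (fun b : B => (b : 𝓜(ℂ, B))) = closure (range fun n => (d n : 𝓜(ℂ, B))) := by
  refine (closure_minimal ?_ isometry_coe.isClosedEmbedding.isClosed_range).antisymm' ?_
  · rintro _ ⟨n, rfl⟩
    exact ⟨d n, rfl⟩
  · change _ ⊆ closure (range ((fun b : B => (b : 𝓜(ℂ, B))) ∘ d))
    rw [← image_univ, range_comp, ← hd.closure_eq]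
    exact image_closure_subset_closure_image isometry_coe.continuous

theorem continuous_fst_apply_strictTopM (b : B) :
    Continuous[strictTopM B, _] (fun m : 𝓜(ℂ, B) => m.fst b) :=
  continuous_iff_le_induced.2 <| (iInf_le _ b).trans inf_le_left

variable {X : Type*} [TopologicalSpace X]

theorem isClosed_setOf_norm_le {g : X → 𝓜(ℂ, B)} (hg : ∀ b, Continuous fun x => (g x).fst b)
    {r : ℝ} (hr : 0 ≤ r) : IsClosed {x | ‖g x‖ ≤ r} := by
  have : {x | ‖g x‖ ≤ r} = ⋂ b : B, {x | ‖(g x).fst b‖ ≤ r * ‖b‖} := by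
    ext x
    simp only [mem_ofPred_eq, mem_iInter, ← norm_fst, ContinuousLinearMap.opNorm_le_iff hr]
  rw [this]
  exact isClosed_iInter fun b => isClosed_le (hg b).norm continuous_const

theorem measurableSet_setOf_exists_eq_coe [MeasurableSpace X] [OpensMeasurableSpace X]
    [TopologicalSpace.SeparableSpace B] {f : X → 𝓜(ℂ, B)}
    (hf : ∀ b, Continuous fun x => (f x).fst b) :
    MeasurableSet {x | ∃ b : B, f x = b} := by
  obtain ⟨d, hd⟩ : ∃ d : ℕ → B, DenseRange d := TopologicalSpace.exists_dense_seq B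
  have hset : {x | ∃ b : B, f x = b} =
      ⋂ j : ℕ, ⋃ n : ℕ, {x | ‖f x - d n‖ ≤ 1 / ((j : ℝ) + 1)} := by
    ext x
    simp only [mem_ofPred_eq, mem_iInter, mem_iUnion, ← dist_eq_norm, eq_comm (a := f x)]
    rw [← mem_range, range_coe_eq_closure_range_coe_of_denseRange hd,
      Metric.mem_closure_range_iff_nat_le]
  rw [hset]
  refine .iInter fun j => .iUnion fun n => (isClosed_setOf_norm_le (fun b => ?_) ?_).measurableSet
  · simp only [sub_fst, sub_apply]
    exact (hf b).sub continuous_const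
  · positivity

end DoubleCentralizer

theorem graph_borel_of_strict_lift_general
    (A B : Type*) [NonUnitalCStarAlgebra A] [NonUnitalCStarAlgebra B]
    [TopologicalSpace.SeparableSpace B]
    (L : 𝓜(ℂ, A) → 𝓜(ℂ, B))
    (hstrict : ∀ r : ℝ, 0 < r →
      @ContinuousOn _ _ (strictTopM A) (strictTopM B) L {x : 𝓜(ℂ, A) | ‖x‖ ≤ r}) :
    @MeasurableSet _
      (@borel _
        (@instTopologicalSpaceProd {x : 𝓜(ℂ, A) // ‖x‖ ≤ 1} {y : 𝓜(ℂ, B) // ‖y‖ ≤ 1}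
          (TopologicalSpace.induced Subtype.val (strictTopM A))
          (TopologicalSpace.induced Subtype.val (strictTopM B))))
      {q : {x : 𝓜(ℂ, A) // ‖x‖ ≤ 1} × {y : 𝓜(ℂ, B) // ‖y‖ ≤ 1} |
        ∃ b : B, L q.1.1 - q.2.1 = (b : 𝓜(ℂ, B))} := by
  let := strictTopM A
  let := strictTopM B
  let := borel ({x : 𝓜(ℂ, A) // ‖x‖ ≤ 1} × {y : 𝓜(ℂ, B) // ‖y‖ ≤ 1})
  have : BorelSpace ({x : 𝓜(ℂ, A) // ‖x‖ ≤ 1} × {y : 𝓜(ℂ, B) // ‖y‖ ≤ 1}) := ⟨rfl⟩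
  have hL : Continuous fun x : {x : 𝓜(ℂ, A) // ‖x‖ ≤ 1} => L x :=
    (hstrict 1 one_pos).comp_continuous continuous_subtype_val fun x => x.2
  refine DoubleCentralizer.measurableSet_setOf_exists_eq_coe fun b => ?_
  have hev := DoubleCentralizer.continuous_fst_apply_strictTopM b
  simp only [DoubleCentralizer.sub_fst, sub_apply]
  exact (hev.comp (hL.comp continuous_fst)).sub
    (hev.comp (continuous_subtype_val.comp continuous_snd))

/-- Let `A`, `B` be separable C*-algebras and `L : 𝓜(A) → 𝓜(B)` a lift of a
*-homomorphism `φ : Q(A) → Q(B)` between the corona algebras (so `L` is additive,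
multiplicative, star-preserving and `ℂ`-homogeneous modulo `B`, and maps differences in
`A` to differences in `B`), which is strictly continuous on bounded sets.  Then the
graph `Γ_φ = {(a, b) ∈ 𝓜(A)₁ × 𝓜(B)₁ : φ(a + A) = b + B} = {(a, b) : L a - b ∈ B}`
is a Borel subset of the product of the unit balls with their (Polish) strict
topologies. -/
theorem graph_borel_of_strict_lift
    (A B : Type*) [NonUnitalCStarAlgebra A] [NonUnitalCStarAlgebra B]
    [TopologicalSpace.SeparableSpace A] [TopologicalSpace.SeparableSpace B]
    (L : 𝓜(ℂ, A) → 𝓜(ℂ, B))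
    (hcong : ∀ x y : 𝓜(ℂ, A), (∃ a : A, x - y = (a : 𝓜(ℂ, A))) →
      ∃ b : B, L x - L y = (b : 𝓜(ℂ, B)))
    (hadd : ∀ x y : 𝓜(ℂ, A), ∃ b : B, L (x + y) - (L x + L y) = (b : 𝓜(ℂ, B)))
    (hmul : ∀ x y : 𝓜(ℂ, A), ∃ b : B, L (x * y) - L x * L y = (b : 𝓜(ℂ, B)))
    (hstar : ∀ x : 𝓜(ℂ, A), ∃ b : B, L (star x) - star (L x) = (b : 𝓜(ℂ, B)))
    (hsmul : ∀ (c : ℂ) (x : 𝓜(ℂ, A)), ∃ b : B, L (c • x) - c • L x = (b : 𝓜(ℂ, B)))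
    (hstrict : ∀ r : ℝ, 0 < r →
      @ContinuousOn _ _ (strictTopM A) (strictTopM B) L {x : 𝓜(ℂ, A) | ‖x‖ ≤ r}) :
    @MeasurableSet _
      (@borel _
        (@instTopologicalSpaceProd {x : 𝓜(ℂ, A) // ‖x‖ ≤ 1} {y : 𝓜(ℂ, B) // ‖y‖ ≤ 1}
          (TopologicalSpace.induced Subtype.val (strictTopM A))
          (TopologicalSpace.induced Subtype.val (strictTopM B))))
      {q : {x : 𝓜(ℂ, A) // ‖x‖ ≤ 1} × {y : 𝓜(ℂ, B) // ‖y‖ ≤ 1} |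
        ∃ b : B, L q.1.1 - q.2.1 = (b : 𝓜(ℂ, B))} :=
  graph_borel_of_strict_lift_general A B L hstrict
end
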